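/- arXiv:1603.07826 — 2 statements merged into one kernel-verified Lean document; each statement's English description precedes it below -/
import Mathlib

section
/- For every real number t and every integer N ≥ 4, the coefficient a_4(N,t) has the closed form a_4(N, t) = 4!·t^4 · Σ_{j_3=0}^{N-4} Σ_{j_2=0}^{N-j_3-4} Σ_{j_1=0}^{N-j_3-j_2-4} 5^{j_3}·4^{j_2}·3^{j_1}·(2^{N-j_3-j_2-j_1-3} - 1). -/
/-- The coefficients `a i N t` defined by `a 0 N t = 1` and, for `1 ≤ i ≤ N`,
`a i N t = i * t * ∑_{j=0}^{N-i} (i+1)^j * a (i-1) (N-j-1) t`. -/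
noncomputable def eulerianCoeff : ℕ → ℕ → ℝ → ℝ
  | 0, _, _ => 1
  | (i + 1), N, t =>
      ((i : ℝ) + 1) * t *
        ∑ j ∈ Finset.range (N - (i + 1) + 1),
          ((i : ℝ) + 2) ^ j * eulerianCoeff i (N - j - 1) t

/-!
Each closed form comes from the previous one by unfolding the recursion once: for
`j ≤ N - (i + 1)` the argument `N - j - 1` is still `≥ i`, so the level-`i` formula applies and
the truncated subtractions merely shift. Level `1` is a geometric sum.
-/

open Finset

theorem eulerianCoeff_succ (i N : ℕ) (t : ℝ) :
    eulerianCoeff (i + 1) N t =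
      ((i : ℝ) + 1) * t *
        ∑ j ∈ range (N - (i + 1) + 1), ((i : ℝ) + 2) ^ j * eulerianCoeff i (N - j - 1) t := by
  rw [eulerianCoeff]

theorem eulerianCoeff_one (t : ℝ) (N : ℕ) (hN : 1 ≤ N) :
    eulerianCoeff 1 N t = t * ((2 : ℝ) ^ N - 1) := by
  rw [eulerianCoeff_succ 0]
  simp only [eulerianCoeff, Nat.cast_zero, zero_add, mul_one, one_mul]
  rw [Nat.sub_add_cancel hN, geom_sum_eq (by norm_num)]
  ring

theorem eulerianCoeff_two (t : ℝ) (N : ℕ) (hN : 2 ≤ N) :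
    eulerianCoeff 2 N t =
      2 * t ^ 2 * ∑ j ∈ range (N - 2 + 1), (3 : ℝ) ^ j * ((2 : ℝ) ^ (N - j - 1) - 1) := by
  rw [eulerianCoeff_succ 1]
  simp only [mul_sum]
  refine sum_congr rfl fun j hj => ?_
  have hj := mem_range.1 hj
  rw [eulerianCoeff_one t _ (by omega)]
  push_cast
  ring

theorem eulerianCoeff_three (t : ℝ) (N : ℕ) (hN : 3 ≤ N) :
    eulerianCoeff 3 N t =
      6 * t ^ 3 * ∑ j₂ ∈ range (N - 3 + 1), ∑ j₁ ∈ range (N - j₂ - 3 + 1),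
        (4 : ℝ) ^ j₂ * (3 : ℝ) ^ j₁ * ((2 : ℝ) ^ (N - j₂ - j₁ - 2) - 1) := by
  rw [eulerianCoeff_succ 2]
  simp only [mul_sum]
  refine sum_congr rfl fun j₂ hj₂ => ?_
  have hj₂ := mem_range.1 hj₂
  rw [eulerianCoeff_two t _ (by omega), show N - j₂ - 1 - 2 = N - j₂ - 3 by omega]
  simp only [mul_sum]
  refine sum_congr rfl fun j₁ _ => ?_
  rw [show N - j₂ - 1 - j₁ - 1 = N - j₂ - j₁ - 2 by omega]
  push_cast
  ring

theorem eulerianCoeff_four (t : ℝ) (N : ℕ) (hN : 4 ≤ N) :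
    eulerianCoeff 4 N t =
      (Nat.factorial 4 : ℝ) * t ^ 4 *
        ∑ j₃ ∈ Finset.range (N - 4 + 1), ∑ j₂ ∈ Finset.range (N - j₃ - 4 + 1),
          ∑ j₁ ∈ Finset.range (N - j₃ - j₂ - 4 + 1),
            (5 : ℝ) ^ j₃ * (4 : ℝ) ^ j₂ * (3 : ℝ) ^ j₁ *
              ((2 : ℝ) ^ (N - j₃ - j₂ - j₁ - 3) - 1) := by
  rw [eulerianCoeff_succ 3]
  simp only [mul_sum]
  refine sum_congr rfl fun j₃ hj₃ => ?_
  have hj₃ := mem_range.1 hj₃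
  rw [eulerianCoeff_three t _ (by omega), show N - j₃ - 1 - 3 = N - j₃ - 4 by omega]
  simp only [mul_sum]
  refine sum_congr rfl fun j₂ _ => ?_
  rw [show N - j₃ - 1 - j₂ - 3 = N - j₃ - j₂ - 4 by omega]
  refine sum_congr rfl fun j₁ _ => ?_
  rw [show N - j₃ - 1 - j₂ - j₁ - 2 = N - j₃ - j₂ - j₁ - 3 by omega]
  push_cast [Nat.factorial]
  ring
end

section
/- (Theorem 2) Let t be a real number with t ≠ 1. For m ≥ 1 let A_n^{(m)}(t) denote the n-th derivative at x = 0 of the function x ↦ ((1-t)/(e^{x(t-1)} - t))^m, and write A_n(t) = A_n^{(1)}(t). Then for all n, N ∈ ℕ, A_{n+N}(t) = Σ_{i=1}^{N+1} a_{i-1}(N, t) · (1-t)^{N+1-i} · A_n^{(i)}(t). -/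
/-- `higherEulerian t m n` is the `n`-th Eulerian polynomial of order `m`, evaluated at `t`,
defined as the `n`-th derivative at `x = 0` of `x ↦ ((1-t)/(e^{x(t-1)} - t))^m`. -/
noncomputable def higherEulerian (t : ℝ) (m n : ℕ) : ℝ :=
  iteratedDeriv n (fun x : ℝ => ((1 - t) / (Real.exp (x * (t - 1)) - t)) ^ m) 0

/-!
Write `g(x) = (1-t)/(e^{x(t-1)} - t)`. Differentiating gives the Riccati equation
`g' = (1-t) g + t g²`, hence `(g^{k+1})' = (k+1)(1-t) g^{k+1} + (k+1) t g^{k+2}`, i.e.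
`A_{n+1}^{(k+1)} = (k+1)(1-t) A_n^{(k+1)} + (k+1) t A_n^{(k+2)}`.
Iterating this recurrence `N` times starting from `A_{n+N}` produces exactly the coefficients
`a_i(N, t)`, whose defining recursion is equivalent to the Pascal-type rule
`a_k(N+1) = (k+1) a_k(N) + k t a_{k-1}(N)`.
-/

open Filter Topology Finset

section Riccati

variable {𝕜 : Type*} [NontriviallyNormedField 𝕜] {f : 𝕜 → 𝕜} {a b x₀ : 𝕜} {n : ℕ}

theorem iteratedDeriv_succ_pow_of_riccati (hf : ContDiffAt 𝕜 n f x₀)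
    (hderiv : ∀ᶠ x in 𝓝 x₀, HasDerivAt f (a * f x + b * f x ^ 2) x) (k : ℕ) :
    iteratedDeriv (n + 1) (fun x => f x ^ (k + 1)) x₀ =
      (k + 1) * a * iteratedDeriv n (fun x => f x ^ (k + 1)) x₀ +
        (k + 1) * b * iteratedDeriv n (fun x => f x ^ (k + 2)) x₀ := by
  have hderiv_pow : deriv (fun x => f x ^ (k + 1)) =ᶠ[𝓝 x₀]
      fun x => (k + 1) * a * f x ^ (k + 1) + (k + 1) * b * f x ^ (k + 2) := by
    filter_upwards [hderiv] with x hx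
    rw [(hx.fun_pow (k + 1)).deriv]
    push_cast
    ring
  rw [iteratedDeriv_succ', hderiv_pow.iteratedDeriv_eq, iteratedDeriv_fun_add
    (contDiffAt_const.mul (hf.pow _)) (contDiffAt_const.mul (hf.pow _)),
    iteratedDeriv_const_mul_field, iteratedDeriv_const_mul_field]

end Riccati

section Recurrence

variable {E : ℕ → ℕ → ℝ} {a b : ℝ}

/-- Not the case `k = N + 1` of `eulerianCoeff_succ_right`: by truncated subtraction,
`eulerianCoeff k N t` need not vanish for `k > N`. -/
theorem eulerianCoeff_top_succ (N : ℕ) (t : ℝ) :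
    eulerianCoeff (N + 1) (N + 1) t = (N + 1) * t * eulerianCoeff N N t := by
  simp [eulerianCoeff]

theorem eulerianCoeff_succ_right {k N : ℕ} (h : k ≤ N) (t : ℝ) :
    eulerianCoeff k (N + 1) t =
      (k + 1) * eulerianCoeff k N t + k * t * eulerianCoeff (k - 1) N t := by
  cases k with
  | zero => simp [eulerianCoeff]
  | succ j =>
    rw [eulerianCoeff, eulerianCoeff, show N + 1 - (j + 1) + 1 = N - j + 1 by omega,
      show N - (j + 1) + 1 = N - j by omega, sum_range_succ']
    simp only [pow_zero, one_mul, Nat.add_sub_cancel, Nat.sub_zero, mul_add, mul_sum]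
    push_cast
    congr 1
    refine sum_congr rfl fun l _ => ?_
    ring

theorem sum_eulerianCoeff_shift
    (hE : ∀ k n, E (k + 1) (n + 1) = (k + 1) * a * E (k + 1) n + (k + 1) * b * E (k + 2) n)
    (N n : ℕ) :
    ∑ k ∈ range (N + 1), eulerianCoeff k N b * a ^ (N - k) * E (k + 1) (n + 1) =
      ∑ k ∈ range (N + 2), eulerianCoeff k (N + 1) b * a ^ (N + 1 - k) * E (k + 1) n := by
  -- `T k` is the second term of the Pascal rule for `eulerianCoeff k (N + 1)`; shifted by one it
  -- is also the `E (k + 2)` part of the recurrence applied to the `k`-th summand.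
  set T : ℕ → ℝ := fun k => k * b * eulerianCoeff (k - 1) N b * a ^ (N + 1 - k) * E (k + 1) n
  have hsplit : ∀ k ∈ range (N + 1),
      eulerianCoeff k N b * a ^ (N - k) * E (k + 1) (n + 1) =
        (k + 1) * eulerianCoeff k N b * a ^ (N + 1 - k) * E (k + 1) n + T (k + 1) := by
    intro k hk
    rw [hE, show N + 1 - k = N - k + 1 by grind]
    simp only [T, Nat.add_sub_cancel, Nat.reduceSubDiff, pow_succ]
    push_cast
    ring
  have hcoeff : ∀ k ∈ range (N + 1),
      eulerianCoeff k (N + 1) b * a ^ (N + 1 - k) * E (k + 1) n =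
        (k + 1) * eulerianCoeff k N b * a ^ (N + 1 - k) * E (k + 1) n + T k := by
    intro k hk
    rw [eulerianCoeff_succ_right (by grind)]
    ring
  have htop : eulerianCoeff (N + 1) (N + 1) b * a ^ (N + 1 - (N + 1)) * E (N + 1 + 1) n =
      T (N + 1) := by
    simp [T, eulerianCoeff_top_succ]
  rw [sum_congr rfl hsplit, sum_range_succ _ (N + 1), sum_congr rfl hcoeff, htop,
    sum_add_distrib, sum_add_distrib, add_assoc, ← sum_range_succ T, sum_range_succ' T]
  simp [T]

theorem eq_sum_eulerianCoeff_of_recurrence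
    (hE : ∀ k n, E (k + 1) (n + 1) = (k + 1) * a * E (k + 1) n + (k + 1) * b * E (k + 2) n)
    (N n : ℕ) :
    E 1 (n + N) = ∑ k ∈ range (N + 1), eulerianCoeff k N b * a ^ (N - k) * E (k + 1) n := by
  induction N generalizing n with
  | zero => simp [eulerianCoeff]
  | succ N ih => rw [← sum_eulerianCoeff_shift hE, ← ih, add_right_comm, add_assoc]

end Recurrence

section GeneratingFunction

noncomputable def eulerianGF (t x : ℝ) : ℝ :=
  (1 - t) / (Real.exp (x * (t - 1)) - t)

theorem hasDerivAt_eulerianGF {t x : ℝ} (hx : Real.exp (x * (t - 1)) - t ≠ 0) :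
    HasDerivAt (eulerianGF t) ((1 - t) * eulerianGF t x + t * eulerianGF t x ^ 2) x := by
  have hden : HasDerivAt (fun x => Real.exp (x * (t - 1)) - t)
      (Real.exp (x * (t - 1)) * (t - 1)) x := by
    simpa using (((hasDerivAt_id x).mul_const (t - 1)).exp).sub_const t
  refine ((hasDerivAt_const x (1 - t)).div hden hx).congr_deriv ?_
  simp only [eulerianGF]
  field_simp
  ring

theorem contDiffAt_eulerianGF {t x : ℝ} (hx : Real.exp (x * (t - 1)) - t ≠ 0)
    {n : WithTop ℕ∞} : ContDiffAt ℝ n (eulerianGF t) x :=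
  contDiffAt_const.div (by fun_prop) hx

theorem higherEulerian_succ {t : ℝ} (ht : t ≠ 1) (k n : ℕ) :
    higherEulerian t (k + 1) (n + 1) =
      (k + 1) * (1 - t) * higherEulerian t (k + 1) n + (k + 1) * t * higherEulerian t (k + 2) n := by
  have hden : ∀ᶠ x in 𝓝 (0 : ℝ), Real.exp (x * (t - 1)) - t ≠ 0 := by
    refine ContinuousAt.eventually_ne (by fun_prop) ?_
    simpa [sub_eq_zero] using ht.symm
  exact iteratedDeriv_succ_pow_of_riccati (f := eulerianGF t)
    (contDiffAt_eulerianGF hden.self_of_nhds) (hden.mono fun x hx => hasDerivAt_eulerianGF hx) k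

end GeneratingFunction

theorem eulerian_higher_order_identity (t : ℝ) (ht : t ≠ 1) (n N : ℕ) :
    higherEulerian t 1 (n + N) =
      ∑ i ∈ Finset.Icc 1 (N + 1),
        eulerianCoeff (i - 1) N t * (1 - t) ^ (N + 1 - i) * higherEulerian t i n := by
  rw [eq_sum_eulerianCoeff_of_recurrence (higherEulerian_succ ht) N n,
    ← Ico_add_one_right_eq_Icc, sum_Ico_eq_sum_range]
  simp only [Nat.add_sub_cancel, add_comm 1, Nat.add_sub_add_right]
end
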